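/- The coupling associated to a quantum channel (equation (eq:marginals)): let ρ be a density matrix of size n and let B₁, …, B_m : Matrix (Fin n) (Fin n) ℂ satisfy ∑ t, (B_t)ᴴ * B_t = 1. Define Π (i, j) (k, l) = ∑ t, (B_t * √ρ) i j * conj((B_t * √ρ) k l). Then Π is a coupling between ρ and σ, where σ = ∑ t, B_t * ρ * (B_t)ᴴ (in particular σ is a density matrix). -/

import Mathlib

open Matrix
open scoped ComplexOrder

noncomputable section

/-- A density matrix: positive semidefinite with trace 1. -/
def IsDensity {ι : Type*} [Fintype ι] (ρ : Matrix ι ι ℂ) : Prop :=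
  ρ.PosSemidef ∧ ρ.trace = 1

/-- A coupling between the quantum states `ρ` and `σ`. -/
def IsCoupling {ι : Type*} [Fintype ι] (ρ σ : Matrix ι ι ℂ)
    (P : Matrix (ι × ι) (ι × ι) ℂ) : Prop :=
  P.PosSemidef ∧ P.trace = 1 ∧
  (∀ j l, ∑ i, P (i, j) (i, l) = ρ l j) ∧
  (∀ i k, ∑ j, P (i, j) (k, j) = σ i k)

/-- The cost operator `C = ∑ s, (Rₛ ⊗ I − I ⊗ Rₛᵀ)²` associated to a family of
Hermitian matrices. -/
def costOp {ι : Type*} [Fintype ι] [DecidableEq ι] {κ : Type*} [Fintype κ]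
    (R : κ → Matrix ι ι ℂ) : Matrix (ι × ι) (ι × ι) ℂ :=
  ∑ s, (Matrix.of (fun p q : ι × ι =>
      R s p.1 q.1 * (if p.2 = q.2 then 1 else 0)
      - (if p.1 = q.1 then 1 else 0) * R s q.2 p.2)) ^ 2

/-- The square root of a positive semidefinite matrix (as defined in Mathlib of December 2024,
since removed from Mathlib). -/
def Matrix.PosSemidef.sqrt {𝕜 : Type*} [RCLike 𝕜] {ι : Type*} [Fintype ι] [DecidableEq ι]
    {A : Matrix ι ι 𝕜} (hA : A.PosSemidef) : Matrix ι ι 𝕜 :=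
  hA.1.eigenvectorUnitary.1 * diagonal ((↑) ∘ (√·) ∘ hA.1.eigenvalues) *
    (star hA.1.eigenvectorUnitary : Matrix ι ι 𝕜)

/-! With `A t = B t * √ρ`, the matrix `Π` is `∑ t, vec (A t) * vec (A t)ᴴ`, hence positive
semidefinite. Its two partial traces are `∑ t, (A t)ᴴ * A t = √ρ (∑ t, (B t)ᴴ * B t) √ρ = ρ`
(transposed) and `∑ t, A t * (A t)ᴴ = ∑ t, B t * ρ * (B t)ᴴ = σ`, and its trace is that of `ρ`. -/

namespace Matrix.PosSemidef

variable {𝕜 ι : Type*} [RCLike 𝕜] [Fintype ι] [DecidableEq ι] {A : Matrix ι ι 𝕜}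

theorem sqrt_conjTranspose (hA : A.PosSemidef) : hA.sqrtᴴ = hA.sqrt := by
  simp only [Matrix.PosSemidef.sqrt, conjTranspose_mul, diagonal_conjTranspose, Matrix.mul_assoc]
  rw [← star_eq_conjTranspose, ← star_eq_conjTranspose, star_star]
  congr 3
  funext i
  simp

theorem sqrt_mul_self (hA : A.PosSemidef) : hA.sqrt * hA.sqrt = A := by
  conv_rhs => rw [hA.1.spectral_theorem, Unitary.conjStarAlgAut_apply]
  have hU : (star hA.1.eigenvectorUnitary : Matrix ι ι 𝕜) * hA.1.eigenvectorUnitary.1 = 1 :=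
    Unitary.coe_star_mul_self _
  simp only [Matrix.PosSemidef.sqrt, Matrix.mul_assoc]
  congr 1
  rw [← Matrix.mul_assoc (star _), hU, Matrix.one_mul, ← Matrix.mul_assoc, diagonal_mul_diagonal]
  congr 3
  ext i
  simp only [Function.comp_apply, ← RCLike.ofReal_mul, Real.mul_self_sqrt (hA.eigenvalues_nonneg i)]

end Matrix.PosSemidef

theorem Matrix.trace_prod_eq_sum_sum {ι R : Type*} [Fintype ι] [AddCommMonoid R]
    (P : Matrix (ι × ι) (ι × ι) R) : P.trace = ∑ j, ∑ i, P (i, j) (i, j) := by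
  rw [trace, Fintype.sum_prod_type, Finset.sum_comm]
  rfl

section KrausCoupling

variable {𝕜 ι κ : Type*} [RCLike 𝕜] [Fintype κ]

def krausCoupling (A : κ → Matrix ι ι 𝕜) : Matrix (ι × ι) (ι × ι) 𝕜 :=
  of fun p q => ∑ t, A t p.1 p.2 * starRingEnd 𝕜 (A t q.1 q.2)

theorem krausCoupling_eq_sum_vecMulVec (A : κ → Matrix ι ι 𝕜) :
    krausCoupling A =
      ∑ t, vecMulVec (fun p : ι × ι => A t p.1 p.2) (star fun p : ι × ι => A t p.1 p.2) := by
  ext p q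
  simp [krausCoupling, Matrix.sum_apply, vecMulVec_apply]

variable [Fintype ι]

theorem posSemidef_krausCoupling (A : κ → Matrix ι ι 𝕜) : (krausCoupling A).PosSemidef := by
  rw [krausCoupling_eq_sum_vecMulVec]
  exact posSemidef_sum _ fun t _ => posSemidef_vecMulVec_self_star _

theorem sum_krausCoupling_fst (A : κ → Matrix ι ι 𝕜) (j l : ι) :
    ∑ i, krausCoupling A (i, j) (i, l) = (∑ t, (A t)ᴴ * A t) l j := by
  simp only [krausCoupling, of_apply, Matrix.sum_apply, mul_apply, conjTranspose_apply,
    RCLike.star_def]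
  rw [Finset.sum_comm]
  exact Finset.sum_congr rfl fun t _ => Finset.sum_congr rfl fun i _ => mul_comm _ _

theorem sum_krausCoupling_snd (A : κ → Matrix ι ι 𝕜) (i k : ι) :
    ∑ j, krausCoupling A (i, j) (k, j) = (∑ t, A t * (A t)ᴴ) i k := by
  simp only [krausCoupling, of_apply, Matrix.sum_apply, mul_apply, conjTranspose_apply,
    RCLike.star_def]
  exact Finset.sum_comm

theorem trace_krausCoupling (A : κ → Matrix ι ι 𝕜) :
    (krausCoupling A).trace = (∑ t, (A t)ᴴ * A t).trace := by
  simp only [trace_prod_eq_sum_sum, sum_krausCoupling_fst]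
  rfl

theorem isCoupling_krausCoupling (A : κ → Matrix ι ι ℂ) (h : (∑ t, (A t)ᴴ * A t).trace = 1) :
    IsCoupling (∑ t, (A t)ᴴ * A t) (∑ t, A t * (A t)ᴴ) (krausCoupling A) :=
  ⟨posSemidef_krausCoupling A, (trace_krausCoupling A).trans h, sum_krausCoupling_fst A,
    sum_krausCoupling_snd A⟩

end KrausCoupling

section Channel

variable {𝕜 ι κ : Type*} [RCLike 𝕜] [Fintype ι] [DecidableEq ι] [Fintype κ]

theorem sum_mul_sqrt_conjTranspose_mul {ρ : Matrix ι ι 𝕜} (hρ : ρ.PosSemidef)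
    {B : κ → Matrix ι ι 𝕜} (hB : ∑ t, (B t)ᴴ * B t = 1) :
    ∑ t, (B t * hρ.sqrt)ᴴ * (B t * hρ.sqrt) = ρ := by
  calc ∑ t, (B t * hρ.sqrt)ᴴ * (B t * hρ.sqrt)
      = hρ.sqrt * (∑ t, (B t)ᴴ * B t) * hρ.sqrt := by
        simp only [conjTranspose_mul, hρ.sqrt_conjTranspose, Finset.mul_sum, Finset.sum_mul,
          Matrix.mul_assoc]
    _ = ρ := by rw [hB, Matrix.mul_one, hρ.sqrt_mul_self]

theorem mul_sqrt_mul_conjTranspose {ρ : Matrix ι ι 𝕜} (hρ : ρ.PosSemidef) (B : Matrix ι ι 𝕜) :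
    B * hρ.sqrt * (B * hρ.sqrt)ᴴ = B * ρ * Bᴴ := by
  calc B * hρ.sqrt * (B * hρ.sqrt)ᴴ = B * (hρ.sqrt * hρ.sqrt) * Bᴴ := by
        simp only [conjTranspose_mul, hρ.sqrt_conjTranspose, Matrix.mul_assoc]
    _ = B * ρ * Bᴴ := by rw [hρ.sqrt_mul_self]

theorem trace_sum_mul_mul_conjTranspose (ρ : Matrix ι ι 𝕜) {B : κ → Matrix ι ι 𝕜}
    (hB : ∑ t, (B t)ᴴ * B t = 1) : (∑ t, B t * ρ * (B t)ᴴ).trace = ρ.trace := by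
  simp only [trace_sum, trace_mul_cycle _ ρ]
  rw [← trace_sum, ← Finset.sum_mul, hB, Matrix.one_mul]

theorem isDensity_sum_mul_mul_conjTranspose {ρ : Matrix ι ι ℂ} (hρ : IsDensity ρ)
    {B : κ → Matrix ι ι ℂ} (hB : ∑ t, (B t)ᴴ * B t = 1) : IsDensity (∑ t, B t * ρ * (B t)ᴴ) :=
  ⟨posSemidef_sum _ fun t _ => hρ.1.mul_mul_conjTranspose_same (B t),
    (trace_sum_mul_mul_conjTranspose ρ hB).trans hρ.2⟩

end Channel

/-- **The coupling associated to a quantum channel** (equation (eq:marginals)):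
given Kraus operators `B_t` with `∑ t, (B_t)ᴴ B_t = 1`, the state
`Π (i,j) (k,l) = ∑ t, (B_t √ρ) i j * conj((B_t √ρ) k l)` is a coupling between `ρ`
and `σ = ∑ t, B_t ρ (B_t)ᴴ`, which is a density matrix. -/
theorem channel_induces_coupling {n m : ℕ}
    (ρ : Matrix (Fin n) (Fin n) ℂ) (hρ : IsDensity ρ)
    (B : Fin m → Matrix (Fin n) (Fin n) ℂ) (hB : ∑ t, (B t)ᴴ * B t = 1) :
    IsDensity (∑ t, B t * ρ * (B t)ᴴ) ∧
    IsCoupling ρ (∑ t, B t * ρ * (B t)ᴴ)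
      (Matrix.of fun p q : Fin n × Fin n =>
        ∑ t, (B t * hρ.1.sqrt) p.1 p.2 * (starRingEnd ℂ) ((B t * hρ.1.sqrt) q.1 q.2)) := by
  have hmarg := sum_mul_sqrt_conjTranspose_mul hρ.1 hB
  have hcoupling :=
    isCoupling_krausCoupling (fun t => B t * hρ.1.sqrt) (by rw [hmarg]; exact hρ.2)
  rw [hmarg] at hcoupling
  simp only [mul_sqrt_mul_conjTranspose] at hcoupling
  exact ⟨isDensity_sum_mul_mul_conjTranspose hρ hB, hcoupling⟩
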